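/- Let h : A → B be a homomorphism of commutative rings and let f ∈ A be an element such that f is a nonzerodivisor on A and h(f) is a nonzerodivisor on B. If B/fB is flat as a module over A/fA and the localization B[1/h(f)] is flat as a module over A[1/f], then B is flat as an A-module. -/

import Mathlib

/-!
By the equational criterion it suffices to show that every relation `∑ aᵢ xᵢ = 0` in the
`A`-module `M = B` is trivial. Since `M[1/f]` is flat over `A`, the relation becomes trivial
there; clearing denominators (and using that `M → M[1/f]` is injective) shows that the relation
on `fⁿ • x` is trivial in `M`. A trivialization of the relation on `f • x` descends to one on
`x`: reduce it modulo `f`, trivialize the resulting system of relations simultaneously in the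
flat `A/f`-module `M/fM`, lift back, and divide by `f`, which is regular on `A` and on `M`.
-/

/-- The ring homomorphism `A ⧸ (f) →+* B ⧸ (h f)` induced by `h : A →+* B`. -/
noncomputable def inducedQuotientMap {A B : Type*} [CommRing A] [CommRing B]
    (h : A →+* B) (f : A) :
    A ⧸ Ideal.span {f} →+* B ⧸ Ideal.span {h f} :=
  Ideal.quotientMap (Ideal.span {h f}) h
    (Ideal.span_le.mpr (Set.singleton_subset_iff.mpr
      (Ideal.mem_comap.mpr (Ideal.subset_span (Set.mem_singleton _)))))

open Pointwise

namespace Module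

section

variable {R M : Type*} [CommRing R] [AddCommGroup M] [Module R M]

theorem IsTrivialRelation.of_fintype {ι κ : Type*} [Fintype ι] [Fintype κ] {f : ι → R}
    {x : ι → M} (a : ι → κ → R) (y : κ → M) (hxy : ∀ i, x i = ∑ j, a i j • y j)
    (hfa : ∀ j, ∑ i, f i * a i j = 0) : IsTrivialRelation f x :=
  isTrivialRelation_iff_vanishesTrivially.mpr <|
    .of_fintype a y hxy fun j => by simpa only [smul_eq_mul, mul_comm] using hfa j

theorem Flat.exists_simultaneous_trivialization [Flat R M] {m k : ℕ} (c : Fin m → Fin k → R)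
    (y : Fin k → M) (hcy : ∀ i, ∑ j, c i j • y j = 0) :
    ∃ (p : ℕ) (e : Fin k → Fin p → R) (w : Fin p → M),
      (∀ j, y j = ∑ q, e j q • w q) ∧ ∀ i q, ∑ j, c i j * e j q = 0 := by
  let rows : (Fin m →₀ R) →ₗ[R] (Fin k →₀ R) :=
    Finsupp.linearCombination R fun i => Finsupp.equivFunOnFinite.symm (c i)
  have hrows : Finsupp.linearCombination R y ∘ₗ rows = 0 := by
    ext i
    simp only [LinearMap.comp_apply, Finsupp.lsingle_apply, rows,
      Finsupp.linearCombination_single, one_smul]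
    simpa [Finsupp.linearCombination_apply, Finsupp.sum_fintype] using hcy i
  obtain ⟨p, a, z, hyz, ha⟩ := Flat.exists_factorization_of_comp_eq_zero_of_free hrows
  refine ⟨p, fun j q => a (Finsupp.single j 1) q, fun q => z (Finsupp.single q 1),
    fun j => ?_, fun i q => ?_⟩
  · calc y j = z (a (Finsupp.single j 1)) := by
          simpa using LinearMap.congr_fun hyz (Finsupp.single j 1)
      _ = z (∑ q, a (Finsupp.single j 1) q • Finsupp.single q 1) := by
        simp only [Finsupp.smul_single_one, Finsupp.univ_sum_single]
      _ = _ := by simp only [map_sum, map_smul]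
  · calc ∑ j, c i j * a (Finsupp.single j 1) q
        = a (∑ j, c i j • Finsupp.single j 1) q := by
          simp only [map_sum, map_smul, Finsupp.finsetSum_apply, Finsupp.smul_apply, smul_eq_mul]
      _ = 0 := by
        simpa [rows, Finsupp.smul_single_one, ← Finsupp.equivFunOnFinite_symm_eq_sum] using
          DFunLike.congr_fun (LinearMap.congr_fun ha (Finsupp.single i 1)) q

end

section Descent

variable {A M N : Type*} [CommRing A] [AddCommGroup M] [Module A M] [AddCommGroup N] [Module A N]
  {f : A} [Module (A ⧸ Ideal.span {f}) N] [IsScalarTower A (A ⧸ Ideal.span {f}) N]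
  [Flat (A ⧸ Ideal.span {f}) N] {π : M →ₗ[A] N}

theorem exists_simultaneous_trivialization_modulo (hπ : Function.Surjective π)
    (hker : LinearMap.ker π ≤ f • ⊤) {m k : ℕ} (c : Fin m → Fin k → A) (y : Fin k → M)
    (hcy : ∀ i, ∑ j, c i j • y j ∈ f • (⊤ : Submodule A M)) :
    ∃ (p : ℕ) (e : Fin k → Fin p → A) (w : Fin p → M) (v : Fin k → M) (g : Fin m → Fin p → A),
      (∀ j, y j = ∑ q, e j q • w q + f • v j) ∧ ∀ i q, ∑ j, c i j * e j q = f * g i q := by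
  have hπf : ∀ u ∈ f • (⊤ : Submodule A M), π u = 0 := by
    intro u hu
    obtain ⟨u, -, rfl⟩ := (Submodule.mem_smul_pointwise_iff_exists _ _ _).mp hu
    rw [map_smul, ← algebraMap_smul (A ⧸ Ideal.span {f}),
      Ideal.Quotient.algebraMap_eq, Ideal.Quotient.mk_singleton_self, zero_smul]
  obtain ⟨p, e', w', hyw', hce'⟩ := Flat.exists_simultaneous_trivialization
    (fun i j => Ideal.Quotient.mk (Ideal.span {f}) (c i j)) (π ∘ y) fun i => by
      simp only [Function.comp_apply, ← Ideal.Quotient.algebraMap_eq, algebraMap_smul,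
        ← map_smul, ← map_sum]
      exact hπf _ (hcy i)
  choose e he using fun j q => Ideal.Quotient.mk_surjective (e' j q)
  choose w hw using fun q => hπ (w' q)
  have hy : ∀ j, y j - ∑ q, e j q • w q ∈ f • (⊤ : Submodule A M) := fun j => hker <| by
    rw [LinearMap.mem_ker, map_sub, sub_eq_zero, map_sum]
    refine (hyw' j).trans (Finset.sum_congr rfl fun q _ => ?_)
    rw [map_smul, hw, ← he, ← Ideal.Quotient.algebraMap_eq, algebraMap_smul]
  have hc : ∀ i q, ∑ j, c i j * e j q ∈ Ideal.span {f} := fun i q => by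
    rw [← Ideal.Quotient.eq_zero_iff_mem]
    simpa [he] using hce' i q
  choose v hv using fun j => (Submodule.mem_smul_pointwise_iff_exists _ _ _).mp (hy j)
  choose g hg using fun i q => Ideal.mem_span_singleton'.mp (hc i q)
  exact ⟨p, e, w, v, g, fun j => by rw [(hv j).2, add_sub_cancel],
    fun i q => by rw [← hg, mul_comm]⟩

theorem IsTrivialRelation.of_smul (hπ : Function.Surjective π) (hker : LinearMap.ker π ≤ f • ⊤)
    (hfA : IsSMulRegular A f) (hfM : IsSMulRegular M f) {l : ℕ} {a : Fin l → A}
    {x : Fin l → M} (hax : IsTrivialRelation a (f • x)) : IsTrivialRelation a x := by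
  obtain ⟨k, c, y, hxy, hac⟩ := hax
  obtain ⟨p, e, w, v, g, hy, hce⟩ :=
    exists_simultaneous_trivialization_modulo hπ hker c y fun i => by
      rw [← hxy i]
      exact Submodule.smul_mem_pointwise_smul _ _ _ trivial
  refine IsTrivialRelation.of_fintype (fun i => Sum.elim (g i) (c i)) (Sum.elim w v)
    (fun i => hfM ?_) (Sum.rec (fun q => hfA.right_eq_zero_of_smul ?_) hac)
  · simp only [Fintype.sum_sum_type, Sum.elim_inl, Sum.elim_inr]
    calc f • x i = ∑ j, c i j • y j := hxy i
      _ = ∑ q, (∑ j, c i j * e j q) • w q + f • ∑ j, c i j • v j := by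
        simp only [hy, smul_add, Finset.sum_add_distrib, Finset.smul_sum, Finset.sum_smul,
          mul_smul, smul_comm f]
        rw [Finset.sum_comm]
      _ = f • (∑ q, g i q • w q + ∑ j, c i j • v j) := by
        simp only [hce, mul_smul, smul_add, Finset.smul_sum]
  · calc f • ∑ i, a i * g i q = ∑ j, (∑ i, a i * c i j) * e j q := by
          simp only [smul_eq_mul, Finset.mul_sum, mul_left_comm f, ← hce, Finset.sum_mul,
            mul_assoc]
          exact Finset.sum_comm
      _ = 0 := by simp [hac]

theorem IsTrivialRelation.of_pow_smul (hπ : Function.Surjective π)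
    (hker : LinearMap.ker π ≤ f • ⊤) (hfA : IsSMulRegular A f) (hfM : IsSMulRegular M f)
    {l : ℕ} {a : Fin l → A} {x : Fin l → M} {n : ℕ} (hax : IsTrivialRelation a (f ^ n • x)) :
    IsTrivialRelation a x := by
  induction n with
  | zero => simpa using hax
  | succ n ih =>
    rw [pow_succ', mul_smul] at hax
    exact ih (hax.of_smul hπ hker hfA hfM)

end Descent

theorem exists_isTrivialRelation_pow_smul {A M L : Type*} [CommRing A] [AddCommGroup M]
    [Module A M] [AddCommGroup L] [Module A L] [Flat A L] {f : A} (hfM : IsSMulRegular M f)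
    (ι : M →ₗ[A] L) [IsLocalizedModule (Submonoid.powers f) ι] {l : ℕ} {a : Fin l → A}
    {x : Fin l → M} (hax : ∑ i, a i • x i = 0) : ∃ n, IsTrivialRelation a (f ^ n • x) := by
  have hι : Function.Injective ι :=
    (IsLocalizedModule.injective_iff_isRegular (Submonoid.powers f) ι).mpr
      fun ⟨_, n, hn⟩ => hn ▸ hfM.pow n
  obtain ⟨k, c, z, hxz, hac⟩ :=
    Flat.isTrivialRelation_of_sum_smul_eq_zero (f := a) (x := ι ∘ x) <| by
      simp only [Function.comp_apply, ← map_smul, ← map_sum, hax, map_zero]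
  obtain ⟨⟨_, n, rfl⟩, hz⟩ :=
    IsLocalizedModule.exist_integer_multiples_of_finite (Submonoid.powers f) ι z
  choose y hy using hz
  refine ⟨n, k, c, y, fun i => hι ?_, hac⟩
  calc ι ((f ^ n • x) i) = f ^ n • ∑ j, c i j • z j := by
        rw [Pi.smul_apply, map_smul, ← hxz i, Function.comp_apply]
    _ = ι (∑ j, c i j • y j) := by
        simp only [map_sum, map_smul, hy, Finset.smul_sum, smul_comm (f ^ n)]

theorem Flat.of_flat_quotient_of_flat_localizedModule {A M N L : Type*} [CommRing A]
    [AddCommGroup M] [Module A M] [AddCommGroup N] [Module A N] [AddCommGroup L] [Module A L]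
    {f : A} [Module (A ⧸ Ideal.span {f}) N] [IsScalarTower A (A ⧸ Ideal.span {f}) N]
    [Flat (A ⧸ Ideal.span {f}) N] [Flat A L] (hfA : IsSMulRegular A f)
    (hfM : IsSMulRegular M f) (π : M →ₗ[A] N) (hπ : Function.Surjective π)
    (hker : LinearMap.ker π ≤ f • ⊤) (ι : M →ₗ[A] L)
    [IsLocalizedModule (Submonoid.powers f) ι] : Flat A M :=
  of_forall_isTrivialRelation fun hax =>
    (exists_isTrivialRelation_pow_smul hfM ι hax).elim fun _ hn =>
      hn.of_pow_smul hπ hker hfA hfM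

end Module

/-- **Useful flatness criterion 1, flat case.**
Let `h : A → B` be a map of commutative rings, `f ∈ A` a nonzerodivisor on `A` with `h f` a
nonzerodivisor on `B`.  If `B/fB` is flat over `A/fA` and `B[1/(h f)]` is flat over `A[1/f]`,
then `B` is flat over `A`. -/
theorem flat_of_quotient_flat_of_localization_flat
    {A B : Type*} [CommRing A] [CommRing B] (h : A →+* B) (f : A)
    (hfA : f ∈ nonZeroDivisors A) (hfB : h f ∈ nonZeroDivisors B)
    (hquot : letI := (inducedQuotientMap h f).toAlgebra
      Module.Flat (A ⧸ Ideal.span {f}) (B ⧸ Ideal.span {h f}))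
    (hloc : letI := (Localization.awayMap h f).toAlgebra
      Module.Flat (Localization.Away f) (Localization.Away (h f))) :
    letI := h.toAlgebra
    Module.Flat A B := by
  let := h.toAlgebra
  let := (inducedQuotientMap h f).toAlgebra
  let := (Localization.awayMap h f).toAlgebra
  have : IsScalarTower A (A ⧸ Ideal.span {f}) (B ⧸ Ideal.span {h f}) :=
    .of_algebraMap_eq fun _ => rfl
  have : IsScalarTower A (Localization.Away f) (Localization.Away (h f)) :=
    .of_algebraMap_eq fun _ => by
      simp only [RingHom.algebraMap_toAlgebra, IsLocalization.Away.map, IsLocalization.map_eq]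
      rfl
  have : Module.Flat A (Localization.Away (h f)) := .trans A (Localization.Away f) _
  have : IsLocalizedModule (Submonoid.powers f)
      (IsScalarTower.toAlgHom A B (Localization.Away (h f))).toLinearMap := by
    rw [isLocalizedModule_iff_isLocalization, Algebra.algebraMapSubmonoid, Submonoid.map_powers]
    exact Localization.isLocalization
  refine Module.Flat.of_flat_quotient_of_flat_localizedModule
    (isRegular_iff_mem_nonZeroDivisors.mpr hfA).left.isSMulRegular
    (isRegular_iff_mem_nonZeroDivisors.mpr hfB).left.isSMulRegular
    (Ideal.Quotient.mkₐ A (Ideal.span {h f})).toLinearMap (Ideal.Quotient.mkₐ_surjective A _)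
    (fun b hb => ?_) (IsScalarTower.toAlgHom A B (Localization.Away (h f))).toLinearMap
  obtain ⟨c, rfl⟩ := Ideal.mem_span_singleton'.mp (Ideal.Quotient.eq_zero_iff_mem.mp hb)
  exact (Submodule.mem_smul_pointwise_iff_exists _ _ _).mpr ⟨c, trivial, mul_comm _ _⟩
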